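/- arXiv:2208.03487 — 2 statements merged into one kernel-verified Lean document; each statement's English description precedes it below -/
import Mathlib

section
/- Let u, v be bounded operators on ℓ² with polar-type decompositions vJ = A_v·√Λ and Ju = A_u·√(1+Λ), where Λ = vᵀv̄ = u*u - 1 is a nonnegative self-adjoint operator, √Λ and √(1+Λ) are defined by functional calculus, and A_v, A_u are antiunitary. Define O = -A_v·√(Λ/(4(1+Λ)))·A_u*. Then 2·O·J·u·φ = -v·J·φ for all φ ∈ ℓ². -/
/-!
The proof is a scalar identity pushed through the functional calculus of `Λ ≥ 0`: on the spectrum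
`l ≥ 0` one has `2 √(l / (4 (1 + l))) √(1 + l) = √l`. Substituting the polar decompositions,
`2 O J u φ = -2 A_v √(Λ/(4(1+Λ))) A_u* A_u √(1+Λ) φ = -A_v √Λ φ = -v J φ`, where the factor `2`
passes through the antilinear `A_v` because it is real.
-/

noncomputable section

/-- The Hilbert space `ℓ²` of square-summable complex sequences. -/
abbrev Hℓ2 : Type := lp (fun _ : ℕ => ℂ) 2

instance instCFCRealHℓ2 : ContinuousFunctionalCalculus ℝ (Hℓ2 →L[ℂ] Hℓ2) IsSelfAdjoint :=
  IsSelfAdjoint.instContinuousFunctionalCalculus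

lemma Real.two_mul_sqrt_div_mul_sqrt_one_add {x : ℝ} (hx : 0 ≤ x) :
    2 * (√(x / (4 * (1 + x))) * √(1 + x)) = √x := by
  have h1 : 0 < √(1 + x) := Real.sqrt_pos.mpr (by linarith)
  rw [Real.sqrt_div' _ (by positivity), Real.sqrt_mul (by norm_num),
    show √(4 : ℝ) = 2 by rw [show (4 : ℝ) = 2 ^ 2 by norm_num, Real.sqrt_sq (by norm_num)]]
  field_simp

lemma Real.continuousOn_sqrt_div_four_mul_one_add :
    ContinuousOn (fun x : ℝ => √(x / (4 * (1 + x)))) (Set.Ici 0) :=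
  Real.continuous_sqrt.comp_continuousOn <|
    continuousOn_id.div (by fun_prop) fun x (hx : 0 ≤ x) => by positivity

section

variable {A : Type*} {p : A → Prop} [Ring A] [StarRing A] [TopologicalSpace A] [Algebra ℝ A]
  [ContinuousFunctionalCalculus ℝ A p] [PartialOrder A] [NonnegSpectrumClass ℝ A]

lemma two_smul_cfc_sqrt_div_mul_cfc_sqrt_one_add {a : A} (ha : 0 ≤ a) :
    (2 : ℝ) • (cfc (fun l : ℝ => √(l / (4 * (1 + l)))) a * cfc (fun l : ℝ => √(1 + l)) a) =
      cfc Real.sqrt a := by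
  have hspec : spectrum ℝ a ⊆ Set.Ici 0 := fun x hx => spectrum_nonneg_of_nonneg ha hx
  have hf := Real.continuousOn_sqrt_div_four_mul_one_add.mono hspec
  rw [← cfc_mul _ _ a hf, ← cfc_const_mul (2 : ℝ) (fun x => √(x / (4 * (1 + x))) * √(1 + x)) a
    (hf.mul (by fun_prop))]
  exact cfc_congr fun x hx => Real.two_mul_sqrt_div_mul_sqrt_one_add (hspec hx)

end

theorem stmt7_general (u v Λ O : Hℓ2 →L[ℂ] Hℓ2) (J Au Av Bu : Hℓ2 → Hℓ2)
    (hΛpos : (0 : Hℓ2 →L[ℂ] Hℓ2) ≤ Λ)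
    (hAvsmul : ∀ (c : ℂ) (φ : Hℓ2), Av (c • φ) = starRingEnd ℂ c • Av φ)
    (hBu1 : ∀ φ : Hℓ2, Bu (Au φ) = φ)
    -- polar decompositions via the functional calculus of `Λ`
    (hv : ∀ φ : Hℓ2, v (J φ) = Av (cfc (fun l : ℝ => Real.sqrt l) Λ φ))
    (hu : ∀ φ : Hℓ2, J (u φ) = Au (cfc (fun l : ℝ => Real.sqrt (1 + l)) Λ φ))
    (hO : ∀ φ : Hℓ2,
      O φ = -(Av (cfc (fun l : ℝ => Real.sqrt (l / (4 * (1 + l)))) Λ (Bu φ)))) :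
    ∀ φ : Hℓ2, (2 : ℂ) • O (J (u φ)) = -(v (J φ)) := by
  intro φ
  have hsqrt := congrArg (· φ) (two_smul_cfc_sqrt_div_mul_cfc_sqrt_one_add hΛpos)
  simp only [smul_apply, ContinuousLinearMap.mul_def, ContinuousLinearMap.comp_apply] at hsqrt
  rw [hO, hu, hBu1, hv, ← hsqrt, smul_neg, ofNat_smul_eq_nsmul ℝ 2, ← ofNat_smul_eq_nsmul ℂ 2,
    hAvsmul, map_ofNat]

/-- Given polar-type decompositions `vJ = A_v √Λ` and `Ju = A_u √(1+Λ)` with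
`Λ = vᵀv̄ = u*u - 1 ≥ 0` and antiunitary `A_v, A_u`, the operator
`O = -A_v √(Λ/(4(1+Λ))) A_u*` satisfies `2·O·J·u φ = -v·J φ` for all `φ`. -/
theorem stmt7 (u v Λ O : Hℓ2 →L[ℂ] Hℓ2) (J Au Av Bu : Hℓ2 → Hℓ2)
    (hJ : ∀ (f : Hℓ2) (j : ℕ), J f j = starRingEnd ℂ (f j))
    (hΛsa : IsSelfAdjoint Λ) (hΛpos : (0 : Hℓ2 →L[ℂ] Hℓ2) ≤ Λ)
    (hΛ1 : ∀ φ : Hℓ2,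
      Λ φ = J (ContinuousLinearMap.adjoint v (J (J (v (J φ))))))
    (hΛ2 : ∀ φ : Hℓ2, Λ φ = ContinuousLinearMap.adjoint u (u φ) - φ)
    -- `A_u` and `A_v` are antiunitary
    (hAuadd : ∀ φ ψ : Hℓ2, Au (φ + ψ) = Au φ + Au ψ)
    (hAusmul : ∀ (c : ℂ) (φ : Hℓ2), Au (c • φ) = starRingEnd ℂ c • Au φ)
    (hAuinner : ∀ φ ψ : Hℓ2, (inner ℂ (Au φ) (Au ψ) : ℂ) = (inner ℂ ψ φ : ℂ))
    (hAusurj : Function.Surjective Au)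
    (hAvadd : ∀ φ ψ : Hℓ2, Av (φ + ψ) = Av φ + Av ψ)
    (hAvsmul : ∀ (c : ℂ) (φ : Hℓ2), Av (c • φ) = starRingEnd ℂ c • Av φ)
    (hAvinner : ∀ φ ψ : Hℓ2, (inner ℂ (Av φ) (Av ψ) : ℂ) = (inner ℂ ψ φ : ℂ))
    (hAvsurj : Function.Surjective Av)
    -- `Bu = A_u*` is the adjoint (= inverse) of the antiunitary `A_u`
    (hBu1 : ∀ φ : Hℓ2, Bu (Au φ) = φ) (hBu2 : ∀ φ : Hℓ2, Au (Bu φ) = φ)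
    -- polar decompositions via the functional calculus of `Λ`
    (hv : ∀ φ : Hℓ2, v (J φ) = Av (cfc (fun l : ℝ => Real.sqrt l) Λ φ))
    (hu : ∀ φ : Hℓ2, J (u φ) = Au (cfc (fun l : ℝ => Real.sqrt (1 + l)) Λ φ))
    (hO : ∀ φ : Hℓ2,
      O φ = -(Av (cfc (fun l : ℝ => Real.sqrt (l / (4 * (1 + l)))) Λ (Bu φ)))) :
    ∀ φ : Hℓ2, (2 : ℂ) • O (J (u φ)) = -(v (J φ)) :=
  stmt7_general u v Λ O J Au Av Bu hΛpos hAvsmul hBu1 hv hu hO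
end
end

section
/- Let O : ℓ² → ℓ² be a bounded operator and J the componentwise conjugation, and suppose (u*v)* = Ju*vJ holds for operators u, v with polar decompositions vJ = A_v√Λ, Ju = A_u√(1+Λ) and O = -A_v√(Λ/(4(1+Λ)))A_u*. Then J∘O* = O∘J, i.e., the adjoint of O is intertwined with O by the conjugation J. -/
noncomputable section

/-!
With `y = A_u* J ψ` and `z = A_u* J φ` one has `⟪O J ψ, φ⟫ = -⟪A_v G y, J A_u z⟫` for
`G = √(Λ/(4(1+Λ)))`, and `J O* = O J` says exactly that this is symmetric in `φ, ψ`.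
The relation `(u*v)* = J u*v J` says that `⟪v J b, u a⟫` is symmetric in `a, b`. Inserting the
polar decompositions `v J = A_v √Λ`, `u = J A_u √(1+Λ)` and taking `a = (1+Λ)^(-1/2) y`,
`b = (1+Λ)^(-1/2) z` turns it into the required symmetry, because `√Λ (1+Λ)^(-1/2) = 2G`.
-/

open ContinuousLinearMap (adjoint)

namespace lp

variable {ι 𝕜 : Type*} [RCLike 𝕜]

theorem eq_star_of_apply_eq_conj {J : lp (fun _ : ι => 𝕜) 2 → lp (fun _ : ι => 𝕜) 2}
    (hJ : ∀ f j, J f j = starRingEnd 𝕜 (f j)) : J = star :=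
  funext fun f => lp.ext (funext (hJ f))

theorem inner_star_right_comm (x y : lp (fun _ : ι => 𝕜) 2) :
    inner 𝕜 x (star y) = inner 𝕜 y (star x) := by
  simp only [lp.inner_eq_tsum, lp.star_apply, RCLike.inner_apply, RCLike.star_def, mul_comm]

theorem star_adjoint_apply_of_inner_symm (T : lp (fun _ : ι => 𝕜) 2 →L[𝕜] lp (fun _ : ι => 𝕜) 2)
    (hT : ∀ φ ψ, inner 𝕜 (T (star ψ)) φ = inner 𝕜 (T (star φ)) ψ) (φ : lp (fun _ : ι => 𝕜) 2) :
    star (adjoint T φ) = T (star φ) := by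
  refine ext_inner_left 𝕜 fun ψ => ?_
  rw [inner_star_right_comm, ContinuousLinearMap.adjoint_inner_left, ← inner_conj_symm, hT,
    inner_conj_symm]

theorem inner_apply_star_symm_of_adjoint_eq
    (u v : lp (fun _ : ι => 𝕜) 2 →L[𝕜] lp (fun _ : ι => 𝕜) 2)
    (huv : ∀ φ, adjoint v (u φ) = star (adjoint u (v (star φ)))) (a b : lp (fun _ : ι => 𝕜) 2) :
    inner 𝕜 (v (star b)) (u a) = inner 𝕜 (v (star a)) (u b) := by
  rw [← ContinuousLinearMap.adjoint_inner_right, huv, inner_star_right_comm, star_star,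
    ContinuousLinearMap.adjoint_inner_left]

end lp

theorem sqrt_one_add_ne_zero {l : ℝ} (hl : 0 ≤ l) : √(1 + l) ≠ 0 :=
  (Real.sqrt_pos.mpr (by linarith)).ne'

theorem continuousOn_inv_sqrt_one_add {s : Set ℝ} (hs : ∀ ⦃l⦄, l ∈ s → 0 ≤ l) :
    ContinuousOn (fun l : ℝ => (√(1 + l))⁻¹) s :=
  (by fun_prop : Continuous fun l : ℝ => √(1 + l)).continuousOn.inv₀
    fun _ hl => sqrt_one_add_ne_zero (hs hl)

section SqrtCalculus

variable {A : Type*} [Ring A] [StarRing A] [Algebra ℝ A] [TopologicalSpace A] [PartialOrder A]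
  [ContinuousFunctionalCalculus ℝ A IsSelfAdjoint] [NonnegSpectrumClass ℝ A] {a : A}

theorem cfc_sqrt_one_add_mul_inv [StarOrderedRing A] (ha : 0 ≤ a) :
    cfc (fun l : ℝ => √(1 + l)) a * cfc (fun l : ℝ => (√(1 + l))⁻¹) a = 1 := by
  have hinv := continuousOn_inv_sqrt_one_add (spectrum_nonneg_of_nonneg ha)
  rw [← cfc_mul _ _ a (by fun_prop) hinv,
    cfc_congr fun l hl => mul_inv_cancel₀ (sqrt_one_add_ne_zero (spectrum_nonneg_of_nonneg ha hl)),
    cfc_const_one ℝ a]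

theorem cfc_sqrt_mul_inv_sqrt_one_add (ha : 0 ≤ a) :
    cfc (fun l : ℝ => √l) a * cfc (fun l : ℝ => (√(1 + l))⁻¹) a
      = (2 : ℝ) • cfc (fun l : ℝ => √(l / (4 * (1 + l)))) a := by
  have hcont : ContinuousOn (fun l : ℝ => √(l / (4 * (1 + l)))) (spectrum ℝ a) :=
    Real.continuous_sqrt.comp_continuousOn <| continuousOn_id.div (by fun_prop)
      fun l hl => by linarith [spectrum_nonneg_of_nonneg ha hl]
  have hinv := continuousOn_inv_sqrt_one_add (spectrum_nonneg_of_nonneg ha)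
  rw [← cfc_mul _ _ a (by fun_prop) hinv, ← cfc_smul _ _ a hcont]
  refine cfc_congr fun l hl => ?_
  have hl0 := spectrum_nonneg_of_nonneg ha hl
  have h4 : √4 = 2 := by rw [show (4 : ℝ) = 2 ^ 2 by norm_num, Real.sqrt_sq zero_le_two]
  have hne := sqrt_one_add_ne_zero hl0
  rw [smul_eq_mul, Real.sqrt_div hl0, Real.sqrt_mul zero_le_four, h4]
  field_simp

end SqrtCalculus

theorem stmt8_general (u v Λ O : Hℓ2 →L[ℂ] Hℓ2) (J Au Av Bu : Hℓ2 → Hℓ2)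
    (hJ : ∀ (f : Hℓ2) (j : ℕ), J f j = starRingEnd ℂ (f j))
    (hΛpos : (0 : Hℓ2 →L[ℂ] Hℓ2) ≤ Λ)
    (hAvsmul : ∀ (c : ℂ) (φ : Hℓ2), Av (c • φ) = starRingEnd ℂ c • Av φ)
    (hBu2 : ∀ φ : Hℓ2, Au (Bu φ) = φ)
    -- polar decompositions via the functional calculus of `Λ`
    (hv : ∀ φ : Hℓ2, v (J φ) = Av (cfc (fun l : ℝ => Real.sqrt l) Λ φ))
    (hu : ∀ φ : Hℓ2, J (u φ) = Au (cfc (fun l : ℝ => Real.sqrt (1 + l)) Λ φ))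
    (hO : ∀ φ : Hℓ2,
      O φ = -(Av (cfc (fun l : ℝ => Real.sqrt (l / (4 * (1 + l)))) Λ (Bu φ))))
    -- `(u*v)* = J u*v J`, a consequence of the Bogoliubov relation `u*v - vᵀū = 0`
    (hc : ∀ φ : Hℓ2,
      ContinuousLinearMap.adjoint v (u φ)
        = J (ContinuousLinearMap.adjoint u (v (J φ)))) :
    ∀ φ : Hℓ2, J (ContinuousLinearMap.adjoint O φ) = O (J φ) := by
  obtain rfl := lp.eq_star_of_apply_eq_conj hJ
  set G := cfc (fun l : ℝ => √(l / (4 * (1 + l)))) Λ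
  set T := cfc (fun l : ℝ => (√(1 + l))⁻¹) Λ
  have hu' (x : Hℓ2) : u x = star (Au (cfc (fun l : ℝ => √(1 + l)) Λ x)) := by
    rw [← hu, star_star]
  have hS2T (x : Hℓ2) : cfc (fun l : ℝ => √(1 + l)) Λ (T x) = x := by
    rw [← mul_apply_eq_comp, cfc_sqrt_one_add_mul_inv hΛpos, one_apply_eq_self]
  have hS1T (x : Hℓ2) : cfc (fun l : ℝ => √l) Λ (T x) = (2 : ℂ) • G x := by
    rw [← mul_apply_eq_comp, cfc_sqrt_mul_inv_sqrt_one_add hΛpos,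
      smul_apply, two_smul, two_smul]
  have hG_symm (y z : Hℓ2) :
      inner ℂ (Av (G y)) (star (Au z)) = inner ℂ (Av (G z)) (star (Au y)) := by
    have h := lp.inner_apply_star_symm_of_adjoint_eq u v hc (T y) (T z)
    simpa [hv, hu', hS2T, hS1T, hAvsmul, inner_smul_left] using h.symm
  refine lp.star_adjoint_apply_of_inner_symm O fun φ ψ => ?_
  simpa [hO, hBu2] using hG_symm (Bu (star ψ)) (Bu (star φ))

/-- Given polar-type decompositions `vJ = A_v √Λ` and `Ju = A_u √(1+Λ)` with
`Λ = vᵀv̄ = u*u - 1 ≥ 0` and antiunitary `A_v, A_u`, the operator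
`O = -A_v √(Λ/(4(1+Λ))) A_u*`: if `(u*v)* = Ju*vJ`, then `J ∘ O* = O ∘ J`. -/
theorem stmt8 (u v Λ O : Hℓ2 →L[ℂ] Hℓ2) (J Au Av Bu : Hℓ2 → Hℓ2)
    (hJ : ∀ (f : Hℓ2) (j : ℕ), J f j = starRingEnd ℂ (f j))
    (hΛsa : IsSelfAdjoint Λ) (hΛpos : (0 : Hℓ2 →L[ℂ] Hℓ2) ≤ Λ)
    (hΛ1 : ∀ φ : Hℓ2,
      Λ φ = J (ContinuousLinearMap.adjoint v (J (J (v (J φ))))))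
    (hΛ2 : ∀ φ : Hℓ2, Λ φ = ContinuousLinearMap.adjoint u (u φ) - φ)
    -- `A_u` and `A_v` are antiunitary
    (hAuadd : ∀ φ ψ : Hℓ2, Au (φ + ψ) = Au φ + Au ψ)
    (hAusmul : ∀ (c : ℂ) (φ : Hℓ2), Au (c • φ) = starRingEnd ℂ c • Au φ)
    (hAuinner : ∀ φ ψ : Hℓ2, (inner ℂ (Au φ) (Au ψ) : ℂ) = (inner ℂ ψ φ : ℂ))
    (hAusurj : Function.Surjective Au)
    (hAvadd : ∀ φ ψ : Hℓ2, Av (φ + ψ) = Av φ + Av ψ)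
    (hAvsmul : ∀ (c : ℂ) (φ : Hℓ2), Av (c • φ) = starRingEnd ℂ c • Av φ)
    (hAvinner : ∀ φ ψ : Hℓ2, (inner ℂ (Av φ) (Av ψ) : ℂ) = (inner ℂ ψ φ : ℂ))
    (hAvsurj : Function.Surjective Av)
    -- `Bu = A_u*` is the adjoint (= inverse) of the antiunitary `A_u`
    (hBu1 : ∀ φ : Hℓ2, Bu (Au φ) = φ) (hBu2 : ∀ φ : Hℓ2, Au (Bu φ) = φ)
    -- polar decompositions via the functional calculus of `Λ`
    (hv : ∀ φ : Hℓ2, v (J φ) = Av (cfc (fun l : ℝ => Real.sqrt l) Λ φ))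
    (hu : ∀ φ : Hℓ2, J (u φ) = Au (cfc (fun l : ℝ => Real.sqrt (1 + l)) Λ φ))
    (hO : ∀ φ : Hℓ2,
      O φ = -(Av (cfc (fun l : ℝ => Real.sqrt (l / (4 * (1 + l)))) Λ (Bu φ))))
    -- `(u*v)* = J u*v J`, a consequence of the Bogoliubov relation `u*v - vᵀū = 0`
    (hc : ∀ φ : Hℓ2,
      ContinuousLinearMap.adjoint v (u φ)
        = J (ContinuousLinearMap.adjoint u (v (J φ)))) :
    ∀ φ : Hℓ2, J (ContinuousLinearMap.adjoint O φ) = O (J φ) :=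
  stmt8_general u v Λ O J Au Av Bu hJ hΛpos hAvsmul hBu2 hv hu hO hc
end
end
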